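/- Let V be a real inner product space of dimension ñ and W ⊆ V a subspace of dimension n, with orthogonal complement W^⊥. The real vector space of all linear maps c : W → so(V) satisfying c(x)y = c(y)x for all x, y ∈ W has dimension (ñ−n)·n(n+1)/2 + n·(ñ−n)(ñ−n−1)/2. (Equivalently, the generalized Spencer cohomology group H^{1,1}(so_ñ(ℝ), W) is isomorphic to W^⊥ ⊗ S²W^* ⊕ so(W^⊥) ⊗ W^*; in particular the so(W)-block of any such c vanishes, which is the statement that the first prolongation of so(n) is zero.) -/

import Mathlib

/-!
Choose an orthonormal basis `(w_a)` of `W` and complete it by an orthonormal basis `(p_μ)` of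
`W^⊥` to a basis `(e_i)` of `V`. A cocycle `c` is then the same as a tensor
`t a i j = ⟪e_i, c(w_a) e_j⟫` that is skew in `(i, j)` and symmetric under exchanging `a` with a
`W`-index in the last slot. On the `W × W × W` block these two symmetries overlap and force
`t = 0`, skewness kills the diagonal, and what remains is free: the entries `⟪p_μ, c(w_a) w_b⟫`
with `a ≤ b` and `⟪p_μ, c(w_a) p_ν⟫` with `μ < ν`. Counting them gives the dimension.
-/

open RealInnerProductSpace Module

/-- The space `Z^{1,1}` of generalized Spencer cocycles: linear maps `c : W → 𝔰𝔬(V)`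
(values skew-adjoint) satisfying `c(x)y = c(y)x` for all `x, y ∈ W`. -/
def spencerZ11 (V : Type*) [NormedAddCommGroup V] [InnerProductSpace ℝ V]
    (W : Submodule ℝ V) : Submodule ℝ (W →ₗ[ℝ] (V →ₗ[ℝ] V)) where
  carrier := {c | (∀ (x : W) (u v : V), ⟪c x u, v⟫ = - ⟪u, c x v⟫) ∧
      ∀ x y : W, c x ↑y = c y ↑x}
  add_mem' := by
    rintro a b ⟨ha₁, ha₂⟩ ⟨hb₁, hb₂⟩
    refine ⟨fun x u v => ?_, fun x y => ?_⟩
    · simp [ha₁ x u v, hb₁ x u v, inner_add_left, inner_add_right]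
      ring
    · simp [ha₂ x y, hb₂ x y]
  zero_mem' := by
    refine ⟨fun x u v => ?_, fun x y => ?_⟩ <;> simp
  smul_mem' := by
    rintro t a ⟨ha₁, ha₂⟩
    refine ⟨fun x u v => ?_, fun x y => ?_⟩
    · simp [ha₁ x u v, real_inner_smul_left, real_inner_smul_right]
    · simp [ha₂ x y]

theorem Fintype.card_subtype_fst_le_snd (α : Type*) [Fintype α] [LinearOrder α] :
    Fintype.card {p : α × α // p.1 ≤ p.2} = Fintype.card α * (Fintype.card α + 1) / 2 := by
  rw [← Fintype.card_congr Sym2.sortEquiv, Sym2.card, Nat.choose_two_right, Nat.add_sub_cancel,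
    mul_comm]

theorem Fintype.card_subtype_fst_lt_snd (α : Type*) [Fintype α] [LinearOrder α] :
    Fintype.card {p : α × α // p.1 < p.2} = Fintype.card α * (Fintype.card α - 1) / 2 := by
  rw [Fintype.card_subtype, Fintype.card_product_filter_lt, Nat.choose_two_right]

/-- The first prolongation of `𝔰𝔬(n)` vanishes. -/
theorem eq_zero_of_symm₁₂_of_skew₂₃ {K α : Type*} [Ring K] [NoZeroDivisors K] [CharZero K]
    {s : α → α → α → K} (hsymm : ∀ a b d, s a b d = s b a d)
    (hskew : ∀ a b d, s a b d = -s a d b) (a b d : α) : s a b d = 0 := by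
  rw [← CharZero.eq_neg_self_iff]
  calc s a b d = s b a d := hsymm a b d
    _ = -s b d a := hskew b a d
    _ = -s d b a := by rw [hsymm]
    _ = s d a b := by rw [hskew, neg_neg]
    _ = s a d b := hsymm d a b
    _ = -s a b d := hskew a d b

section Tensors

variable (K : Type*) [Ring K] (α β : Type*)

/-- `t a i j` models the `(i, j)` entry of `c(w_a)` in an orthonormal basis of `V = W ⊕ W^⊥`
indexed by `α ⊕ β`: the first condition says `c(w_a) ∈ 𝔰𝔬(V)`, the second
`c(w_a) w_b = c(w_b) w_a`. -/
def spencerTensors : Submodule K (α → Matrix (α ⊕ β) (α ⊕ β) K) where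
  carrier := {t | (∀ a i j, t a i j = -t a j i) ∧ ∀ a b i, t a i (.inl b) = t b i (.inl a)}
  add_mem' := by
    rintro s t ⟨hs₁, hs₂⟩ ⟨ht₁, ht₂⟩
    exact ⟨fun a i j => by simp [hs₁ a i j, ht₁ a i j, add_comm],
      fun a b i => by simp [hs₂ a b i, ht₂ a b i]⟩
  zero_mem' := ⟨fun _ _ _ => by simp, fun _ _ _ => rfl⟩
  smul_mem' := by
    rintro r t ⟨ht₁, ht₂⟩
    exact ⟨fun a i j => by simp [ht₁ a i j], fun a b i => by simp [ht₂ a b i]⟩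

/-- The summands index `W^⊥ ⊗ S²W^*` and `𝔰𝔬(W^⊥) ⊗ W^*` respectively. -/
abbrev spencerIndex [LinearOrder α] [LinearOrder β] : Type _ :=
  ({p : α × α // p.1 ≤ p.2} × β) ⊕ (α × {q : β × β // q.1 < q.2})

variable {K α β} [LinearOrder α] [LinearOrder β]

def spencerTensorOfCoeffs (f : spencerIndex α β → K) (a : α) : α ⊕ β → α ⊕ β → K
  | .inl _, .inl _ => 0
  | .inr μ, .inl b => f (.inl (Sym2.sortEquiv s(a, b), μ))
  | .inl b, .inr μ => -f (.inl (Sym2.sortEquiv s(a, b), μ))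
  | .inr μ, .inr ν =>
      if h : μ < ν then f (.inr (a, ⟨(μ, ν), h⟩))
      else if h' : ν < μ then -f (.inr (a, ⟨(ν, μ), h'⟩)) else 0

theorem spencerTensorOfCoeffs_mem (f : spencerIndex α β → K) :
    spencerTensorOfCoeffs f ∈ spencerTensors K α β := by
  refine ⟨fun a i j => ?_, fun a b i => ?_⟩
  · rcases i with b | μ <;> rcases j with d | ν <;>
      simp only [spencerTensorOfCoeffs, neg_neg, neg_zero]
    rcases lt_trichotomy μ ν with h | rfl | h
    · simp [h, lt_asymm h]
    · simp
    · simp [h, lt_asymm h]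
  · rcases i with d | μ
    · rfl
    · simp only [spencerTensorOfCoeffs, Sym2.eq_swap]

def spencerCoeffs : spencerTensors K α β →ₗ[K] (spencerIndex α β → K) where
  toFun t := Sum.elim (fun x => t.1 x.1.1.1 (.inr x.2) (.inl x.1.1.2))
    (fun x => t.1 x.1 (.inr x.2.1.1) (.inr x.2.1.2))
  map_add' _ _ := by ext (_ | _) <;> rfl
  map_smul' _ _ := by ext (_ | _) <;> rfl

variable [NoZeroDivisors K] [CharZero K]

theorem spencerTensorOfCoeffs_spencerCoeffs (t : spencerTensors K α β) :
    spencerTensorOfCoeffs (spencerCoeffs t) = t.1 := by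
  obtain ⟨t, hskew, hsymm⟩ := t
  have hmixed (a b : α) (μ : β) :
      t (a ⊓ b) (.inr μ) (.inl (a ⊔ b)) = t a (.inr μ) (.inl b) := by
    rcases le_total a b with h | h
    · simp [h]
    · simp [h, hsymm b a]
  ext a (b | μ) (d | ν)
  · exact (eq_zero_of_symm₁₂_of_skew₂₃ (s := fun a b d => t a (.inl d) (.inl b))
      (fun a b d => hsymm a b _) (fun a b d => hskew a _ _) a d b).symm
  · simp [spencerTensorOfCoeffs, spencerCoeffs, hmixed, hskew a (.inl b)]
  · simp [spencerTensorOfCoeffs, spencerCoeffs, hmixed]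
  · simp only [spencerTensorOfCoeffs, spencerCoeffs]
    rcases lt_trichotomy μ ν with h | rfl | h
    · simp [h]
    · simpa [eq_comm] using CharZero.eq_neg_self_iff.mp (hskew a (.inr μ) (.inr μ))
    · simp [h, lt_asymm h, hskew a (.inr μ)]

def spencerTensorsEquiv : spencerTensors K α β ≃ₗ[K] (spencerIndex α β → K) where
  __ := spencerCoeffs
  invFun f := ⟨spencerTensorOfCoeffs f, spencerTensorOfCoeffs_mem f⟩
  left_inv t := Subtype.ext (spencerTensorOfCoeffs_spencerCoeffs t)
  right_inv f := by
    ext (⟨p, μ⟩ | ⟨a, q, hq⟩)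
    · simp [spencerCoeffs, spencerTensorOfCoeffs, ← Sym2.sortEquiv_symm_apply]
    · simp [spencerCoeffs, spencerTensorOfCoeffs, hq]

theorem finrank_spencerTensors {K : Type*} [Field K] [CharZero K] [Fintype α] [Fintype β] :
    finrank K (spencerTensors K α β)
      = Fintype.card β * (Fintype.card α * (Fintype.card α + 1) / 2)
        + Fintype.card α * (Fintype.card β * (Fintype.card β - 1) / 2) := by
  rw [spencerTensorsEquiv.finrank_eq, finrank_fintype_fun_eq_card, Fintype.card_sum,
    Fintype.card_prod, Fintype.card_prod, Fintype.card_subtype_fst_le_snd,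
    Fintype.card_subtype_fst_lt_snd]
  ring

end Tensors

theorem LinearMap.apply_comm_of_basis {R M N ι : Type*} [CommSemiring R] [AddCommMonoid M]
    [Module R M] [AddCommMonoid N] [Module R N] (b : Basis ι R M) {B : M →ₗ[R] M →ₗ[R] N}
    (h : ∀ i j, B (b i) (b j) = B (b j) (b i)) (x y : M) : B x y = B y x :=
  congr($(LinearMap.ext_basis b b (B' := B.flip) h) x y)

theorem inner_apply_eq_neg_of_basis {V M ι κ : Type*} [NormedAddCommGroup V]
    [InnerProductSpace ℝ V] [AddCommGroup M] [Module ℝ M] (b : Basis κ ℝ M) (e : Basis ι ℝ V)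
    {c : M →ₗ[ℝ] V →ₗ[ℝ] V} (h : ∀ a i j, ⟪c (b a) (e i), e j⟫ = -⟪e i, c (b a) (e j)⟫)
    (x : M) (u v : V) : ⟪c x u, v⟫ = -⟪u, c x v⟫ := by
  have hc : c.compr₂ (innerₗ V) = LinearMap.lflip.toLinearMap ∘ₗ c.compr₂ (-innerₗ V) :=
    b.ext fun a => LinearMap.ext_basis e e fun i j => by
      simpa [real_inner_comm] using h a i j
  simpa [real_inner_comm] using congr($hc x u v)

section Coordinates

variable {V : Type*} [NormedAddCommGroup V] [InnerProductSpace ℝ V] {W : Submodule ℝ V}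
  {α β : Type*} [Fintype α] [Fintype β] [DecidableEq α] [DecidableEq β]
  (bW : Basis α ℝ W) (e : OrthonormalBasis (α ⊕ β) ℝ V)

noncomputable def spencerCoords : (W →ₗ[ℝ] V →ₗ[ℝ] V) ≃ₗ[ℝ] (α → Matrix (α ⊕ β) (α ⊕ β) ℝ) :=
  (bW.constr ℝ).symm ≪≫ₗ
    LinearEquiv.piCongrRight fun _ => LinearMap.toMatrix e.toBasis e.toBasis

theorem spencerCoords_apply (c : W →ₗ[ℝ] V →ₗ[ℝ] V) (a : α) (i j : α ⊕ β) :
    spencerCoords bW e c a i j = ⟪e i, c (bW a) (e j)⟫ := by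
  simp [spencerCoords, LinearMap.toMatrix_apply, OrthonormalBasis.repr_apply_apply]

theorem spencerZ11_eq_comap_spencerCoords {bW e} (he : ∀ a, e (.inl a) = bW a) :
    spencerZ11 V W = (spencerTensors ℝ α β).comap (spencerCoords bW e).toLinearMap := by
  ext c
  simp only [Submodule.mem_comap, spencerTensors, Submodule.mem_mk, AddSubmonoid.mem_mk,
    AddSubsemigroup.mem_mk, Set.mem_ofPred_eq, LinearEquiv.coe_coe, spencerCoords_apply, he]
  constructor
  · rintro ⟨hskew, hsymm⟩
    exact ⟨fun a i j => by rw [real_inner_comm, hskew, real_inner_comm],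
      fun a b i => by rw [hsymm]⟩
  · rintro ⟨hskew, hsymm⟩
    refine ⟨inner_apply_eq_neg_of_basis bW e.toBasis fun a i j => ?_, fun x y => ?_⟩
    · simpa [real_inner_comm] using hskew a j i
    · refine (c.compl₂ W.subtype).apply_comm_of_basis bW (fun a b => ?_) x y
      exact e.toBasis.ext_elem fun i => by
        simpa [OrthonormalBasis.repr_apply_apply] using hsymm a b i

end Coordinates

theorem finrank_spencerZ11 (V : Type*) [NormedAddCommGroup V] [InnerProductSpace ℝ V]
    [FiniteDimensional ℝ V] (W : Submodule ℝ V) :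
    finrank ℝ ↥(spencerZ11 V W)
      = (finrank ℝ V - finrank ℝ W) * (finrank ℝ W * (finrank ℝ W + 1) / 2)
        + finrank ℝ W
          * ((finrank ℝ V - finrank ℝ W) * (finrank ℝ V - finrank ℝ W - 1) / 2) := by
  let bW := stdOrthonormalBasis ℝ W
  let e := (bW.prod (stdOrthonormalBasis ℝ Wᗮ)).map W.orthogonalDecomposition.symm
  have he : ∀ a, e (.inl a) = bW.toBasis a := by simp [e]
  have hcodim : finrank ℝ V - finrank ℝ W = finrank ℝ Wᗮ := by
    rw [← W.finrank_add_finrank_orthogonal, Nat.add_sub_cancel_left]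
  rw [spencerZ11_eq_comap_spencerCoords he, Submodule.comap_equiv_eq_map_symm,
    LinearEquiv.finrank_map_eq, finrank_spencerTensors, hcodim]
  simp
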